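/- arXiv:math-ph/0703017 — 2 statements merged into one kernel-verified Lean document; each statement's English description precedes it below -/
import Mathlib

section
/- Let f be holomorphic on the open upper half-plane ℂ₊ = {λ ∈ ℂ : Im λ > 0} with Im f(λ) ≥ 0 for all λ ∈ ℂ₊, and suppose that f(iη)/(iη) → 1 as η → +∞ (η real). Then Im f(λ) ≥ Im λ for every λ ∈ ℂ₊. -/
/-!
For `w` in the upper half-plane, `cayley w z = (z - w) / (z - conj w)` maps the upper half-plane
onto the unit disc, sending `w` to `0`. Conjugating a Herglotz function with positive imaginary
part by these maps and applying the Schwarz lemma gives the Pick inequality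
`Im z · Im w · |f z - conj (f w)|² ≤ Im f(z) · Im f(w) · |z - conj w|²`, which survives the
passage `f ↦ f + iε`, `ε → 0` to `Im f ≥ 0`. Taking `w = iη`, dividing by `η³` and letting
`η → ∞`, the normalisation `f(iη)/(iη) → 1` makes every other factor tend to `1`, leaving
`Im z ≤ Im f(z)`.
-/

open Complex ComplexConjugate Metric Filter Topology

noncomputable def cayley (w z : ℂ) : ℂ := (z - w) / (z - conj w)

noncomputable def invCayley (w u : ℂ) : ℂ := (w - conj w * u) / (1 - u)

section Cayley

variable {w z : ℂ}

theorem normSq_sub_conj (z w : ℂ) :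
    normSq (z - conj w) = normSq (z - w) + 4 * z.im * w.im := by
  simp only [normSq_apply, sub_re, sub_im, conj_re, conj_im]
  ring

theorem sub_conj_ne_zero (hz : 0 < z.im) (hw : 0 < w.im) : z - conj w ≠ 0 := by
  intro h
  have := congrArg im h
  simp only [sub_im, conj_im, zero_im] at this
  linarith

theorem normSq_cayley (hz : 0 < z.im) (hw : 0 < w.im) :
    normSq (cayley w z) = 1 - 4 * z.im * w.im / normSq (z - conj w) := by
  have hpos : normSq (z - conj w) ≠ 0 := normSq_eq_zero.not.mpr (sub_conj_ne_zero hz hw)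
  rw [cayley, normSq_div, eq_sub_iff_add_eq, ← add_div, ← normSq_sub_conj, div_self hpos]

theorem norm_cayley_lt_one (hz : 0 < z.im) (hw : 0 < w.im) : ‖cayley w z‖ < 1 := by
  have hpos : 0 < normSq (z - conj w) := normSq_pos.mpr (sub_conj_ne_zero hz hw)
  have : normSq (cayley w z) < 1 := by
    rw [normSq_cayley hz hw]
    have : 0 < 4 * z.im * w.im / normSq (z - conj w) := by positivity
    linarith
  rwa [normSq_eq_norm_sq, sq_lt_one_iff₀ (norm_nonneg _)] at this

@[simp]
theorem cayley_self (w : ℂ) : cayley w w = 0 := by simp [cayley]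

@[simp]
theorem invCayley_zero (w : ℂ) : invCayley w 0 = w := by simp [invCayley]

theorem invCayley_cayley (hz : 0 < z.im) (hw : 0 < w.im) : invCayley w (cayley w z) = z := by
  have hden := sub_conj_ne_zero hz hw
  have hw' : w - conj w ≠ 0 := sub_conj_ne_zero hw hw
  have h1 : 1 - (z - w) / (z - conj w) = (w - conj w) / (z - conj w) := by
    field_simp; ring
  rw [invCayley, cayley, h1]
  field_simp
  ring

theorem im_invCayley (w u : ℂ) :
    (invCayley w u).im = w.im * (1 - normSq u) / normSq (1 - u) := by
  simp only [invCayley, div_im, mul_re, mul_im, sub_re, sub_im, one_re, one_im, conj_re, conj_im,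
    normSq_apply]
  ring

theorem im_invCayley_pos (hw : 0 < w.im) {u : ℂ} (hu : ‖u‖ < 1) : 0 < (invCayley w u).im := by
  have hu1 : (1 : ℂ) - u ≠ 0 := sub_ne_zero.mpr (by rintro rfl; simp at hu)
  have hnu : normSq u < 1 := by rw [normSq_eq_norm_sq]; nlinarith [norm_nonneg u]
  rw [im_invCayley]
  exact div_pos (mul_pos hw (by linarith)) (normSq_pos.mpr hu1)

theorem differentiableOn_cayley (hw : 0 < w.im) :
    DifferentiableOn ℂ (cayley w) {z | 0 < z.im} :=
  (differentiableOn_id.sub_const w).div (differentiableOn_id.sub_const _)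
    fun _ hz => sub_conj_ne_zero hz hw

theorem differentiableOn_invCayley (w : ℂ) : DifferentiableOn ℂ (invCayley w) (ball 0 1) :=
  ((differentiableOn_const w).sub (differentiableOn_id.const_mul _)).div
    ((differentiableOn_const 1).sub differentiableOn_id)
    fun u hu => sub_ne_zero.mpr (by rintro rfl; simp at hu)

end Cayley

section Pick

variable {f : ℂ → ℂ} {z w : ℂ}

theorem norm_cayley_comp_le_norm_cayley (hf : DifferentiableOn ℂ f {z | 0 < z.im})
    (him : ∀ z, 0 < z.im → 0 < (f z).im) (hz : 0 < z.im) (hw : 0 < w.im) :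
    ‖cayley (f w) (f z)‖ ≤ ‖cayley w z‖ := by
  set g := cayley (f w) ∘ f ∘ invCayley w
  have hmaps : ∀ u ∈ ball (0 : ℂ) 1, 0 < (invCayley w u).im := fun u hu =>
    im_invCayley_pos hw (mem_ball_zero_iff.mp hu)
  have hg : DifferentiableOn ℂ g (ball 0 1) :=
    (differentiableOn_cayley (him w hw)).comp (hf.comp (differentiableOn_invCayley w) hmaps)
      fun u hu => him _ (hmaps u hu)
  have hg_maps : Set.MapsTo g (ball 0 1) (closedBall 0 1) := fun u hu =>
    mem_closedBall_zero_iff.mpr (norm_cayley_lt_one (him _ (hmaps u hu)) (him w hw)).le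
  have := Complex.norm_le_norm_of_mapsTo_ball hg hg_maps (by simp [g])
    (norm_cayley_lt_one hz hw)
  simpa [g, invCayley_cayley hz hw] using this

theorem pick_inequality_of_im_pos (hf : DifferentiableOn ℂ f {z | 0 < z.im})
    (him : ∀ z, 0 < z.im → 0 < (f z).im) (hz : 0 < z.im) (hw : 0 < w.im) :
    z.im * w.im * normSq (f z - conj (f w)) ≤ (f z).im * (f w).im * normSq (z - conj w) := by
  have hfz := him z hz
  have hfw := him w hw
  have hle : normSq (cayley (f w) (f z)) ≤ normSq (cayley w z) := by
    rw [normSq_eq_norm_sq, normSq_eq_norm_sq]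
    exact pow_le_pow_left₀ (norm_nonneg _) (norm_cayley_comp_le_norm_cayley hf him hz hw) 2
  rw [normSq_cayley hfz hfw, normSq_cayley hz hw] at hle
  have hpos₁ : 0 < normSq (f z - conj (f w)) := normSq_pos.mpr (sub_conj_ne_zero hfz hfw)
  have hpos₂ : 0 < normSq (z - conj w) := normSq_pos.mpr (sub_conj_ne_zero hz hw)
  have := (div_le_div_iff₀ hpos₂ hpos₁).mp (by linarith : 4 * z.im * w.im / normSq (z - conj w)
    ≤ 4 * (f z).im * (f w).im / normSq (f z - conj (f w)))
  linarith

theorem pick_inequality (hf : DifferentiableOn ℂ f {z | 0 < z.im})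
    (him : ∀ z, 0 < z.im → 0 ≤ (f z).im) (hz : 0 < z.im) (hw : 0 < w.im) :
    z.im * w.im * normSq (f z - conj (f w)) ≤ (f z).im * (f w).im * normSq (z - conj w) := by
  have hε : ∀ ε : ℝ, 0 < ε → z.im * w.im * normSq (f z - conj (f w) + 2 * ε * I) ≤
      ((f z).im + ε) * ((f w).im + ε) * normSq (z - conj w) := fun ε hε => by
    have := pick_inequality_of_im_pos (f := fun z => f z + ε * I) (hf.add_const _)
      (fun z hz => by simpa using add_pos_of_nonneg_of_pos (him z hz) hε) hz hw
    convert this using 3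
    · simp only [map_add, map_mul, conj_ofReal, conj_I]; ring
    all_goals simp
  have hl : Tendsto (fun ε : ℝ => z.im * w.im * normSq (f z - conj (f w) + 2 * ε * I))
      (𝓝[>] 0) (𝓝 (z.im * w.im * normSq (f z - conj (f w)))) := by
    refine tendsto_nhdsWithin_of_tendsto_nhds ?_
    simpa using (show Continuous fun ε : ℝ =>
      z.im * w.im * normSq (f z - conj (f w) + 2 * ε * I) by fun_prop).tendsto 0
  have hr : Tendsto (fun ε : ℝ => ((f z).im + ε) * ((f w).im + ε) * normSq (z - conj w))
      (𝓝[>] 0) (𝓝 ((f z).im * (f w).im * normSq (z - conj w))) := by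
    refine tendsto_nhdsWithin_of_tendsto_nhds ?_
    simpa using (show Continuous fun ε : ℝ =>
      ((f z).im + ε) * ((f w).im + ε) * normSq (z - conj w) by fun_prop).tendsto 0
  exact le_of_tendsto_of_tendsto hl hr (eventually_nhdsWithin_of_forall hε)

theorem pick_inequality_at_imaginary_axis (hf : DifferentiableOn ℂ f {z | 0 < z.im})
    (him : ∀ z, 0 < z.im → 0 ≤ (f z).im) (hz : 0 < z.im) {η : ℝ} (hη : 0 < η) :
    z.im * normSq (f z / η - conj (f (η * I) / η)) ≤
      (f z).im * (f (η * I) / η).im * normSq (z / η + I) := by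
  -- the Pick inequality at `w = iη`, divided by `η³`
  have hpick := pick_inequality hf him hz (w := η * I) (by simpa using hη)
  have hsub : f z / η - conj (f (η * I) / η) = (f z - conj (f (η * I))) / η := by
    rw [map_div₀, conj_ofReal, sub_div]
  have hadd : z / η + I = (z - conj (η * I)) / η := by
    rw [map_mul, conj_ofReal, conj_I, mul_neg, sub_neg_eq_add, add_div,
      mul_div_cancel_left₀ _ (ofReal_ne_zero.mpr hη.ne')]
  simp only [im_ofReal_mul, I_im, mul_one] at hpick
  rw [hsub, hadd, normSq_div, normSq_div, normSq_ofReal, div_ofReal_im]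
  rw [← mul_le_mul_iff_of_pos_left (by positivity : 0 < η * η * η)]
  field_simp
  linarith

end Pick

theorem tendsto_ofReal_inv_atTop : Tendsto (fun η : ℝ => (η : ℂ)⁻¹) atTop (𝓝 0) := by
  simpa using tendsto_inv_atTop_zero.ofReal

/-- Herglotz-type estimate: if `f` is holomorphic on the upper half-plane with
`Im f ≥ 0` there and `f(iη)/(iη) → 1` as `η → +∞`, then `Im f(λ) ≥ Im λ` on the
upper half-plane. -/
theorem stmt_10 (f : ℂ → ℂ)
    (hf : DifferentiableOn ℂ f {z : ℂ | 0 < z.im})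
    (him : ∀ z : ℂ, 0 < z.im → 0 ≤ (f z).im)
    (hlim : Filter.Tendsto (fun η : ℝ => f ((η : ℂ) * Complex.I) / ((η : ℂ) * Complex.I))
      Filter.atTop (nhds 1)) :
    ∀ z : ℂ, 0 < z.im → z.im ≤ (f z).im := by
  intro z hz
  have hq : Tendsto (fun η : ℝ => f (η * I) / η) atTop (𝓝 I) := by
    have := hlim.const_mul I
    rw [mul_one] at this
    refine this.congr' ?_
    filter_upwards [eventually_ne_atTop 0] with η hη
    field_simp
  have hA : Tendsto (fun η : ℝ => normSq (f z / η - conj (f (η * I) / η))) atTop (𝓝 1) := by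
    have := (tendsto_ofReal_inv_atTop.const_mul (f z)).sub ((continuous_conj.tendsto I).comp hq)
    simpa [Function.comp_def, div_eq_mul_inv] using (continuous_normSq.tendsto _).comp this
  have hB : Tendsto (fun η : ℝ => (f (η * I) / η).im) atTop (𝓝 1) :=
    (continuous_im.tendsto I).comp hq
  have hC : Tendsto (fun η : ℝ => normSq (z / η + I)) atTop (𝓝 1) := by
    have := (tendsto_ofReal_inv_atTop.const_mul z).add_const I
    simpa [Function.comp_def, div_eq_mul_inv] using (continuous_normSq.tendsto _).comp this
  have hle := le_of_tendsto_of_tendsto (hA.const_mul z.im) ((hB.const_mul (f z).im).mul hC)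
    (eventually_gt_atTop 0 |>.mono fun η hη => pick_inequality_at_imaginary_axis hf him hz hη)
  simpa using hle
end

section
/- Let λ₀⁺ ≥ 0, let δ > 0, and for each integer n ≥ 1 let λ_n⁻, λ_n⁺ be reals with δ ≤ λ_n⁻ ≤ λ_n⁺ and λ_n⁻ → ∞ as n → ∞. Let μ₀⁺ ∈ ℝ and μ_n^± ∈ ℝ satisfy Σ_{n ≥ 1} |μ_n⁺ + μ_n⁻| < ∞ and Σ_{n ≥ 1} |(μ_n⁺ − μ_n⁻)·(λ_n⁺ − λ_n⁻)| < ∞. Then for every λ < 0 the series S(λ) = μ₀⁺/(λ − λ₀⁺) + Σ_{n ≥ 1} ( μ_n⁺/(λ − λ_n⁺) + μ_n⁻/(λ − λ_n⁻) ) converges absolutely, and λ·S(λ) → μ₀⁺ + Σ_{n ≥ 1}(μ_n⁺ + μ_n⁻) as λ → −∞. -/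
open Filter

private lemma aux_key (δ p m a b : ℝ) (hδ : 0 < δ) (ha : a ≤ -δ) (hb : b ≤ -δ) :
    p / a + m / b = ((p + m) * (a + b) + (p - m) * (b - a)) / (2 * (a * b)) := by
  have ha0 : a ≠ 0 := by nlinarith
  have hb0 : b ≠ 0 := by nlinarith
  field_simp
  ring

private lemma aux_bound1 (δ p m a b : ℝ) (hδ : 0 < δ) (ha : a ≤ -δ) (hb : b ≤ -δ) :
    |p / a + m / b| ≤ |p + m| / δ + |(p - m) * (b - a)| / (2 * δ ^ 2) := by
  have haa : δ ≤ |a| := by rw [abs_of_nonpos (by nlinarith)]; linarith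
  have hbb : δ ≤ |b| := by rw [abs_of_nonpos (by nlinarith)]; linarith
  have hpa : 0 < |a| := lt_of_lt_of_le hδ haa
  have hpb : 0 < |b| := lt_of_lt_of_le hδ hbb
  rw [aux_key δ p m a b hδ ha hb, abs_div, abs_mul, abs_mul, abs_two]
  set X := (p + m) * (a + b)
  set Y := (p - m) * (b - a)
  calc |X + Y| / (2 * (|a| * |b|)) ≤ (|X| + |Y|) / (2 * (|a| * |b|)) := by
        gcongr; exact abs_add_le _ _
    _ = |X| / (2 * (|a| * |b|)) + |Y| / (2 * (|a| * |b|)) := add_div _ _ _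
    _ ≤ |p + m| / δ + |Y| / (2 * δ ^ 2) := by
        gcongr ?_ + ?_
        · rw [div_le_div_iff₀ (by positivity) hδ]
          have hX : |X| = |p + m| * |a + b| := abs_mul _ _
          nlinarith [mul_le_mul_of_nonneg_left (abs_add_le a b) (abs_nonneg (p + m)),
            mul_nonneg (abs_nonneg (p + m)) (mul_nonneg (sub_nonneg.2 haa) hpb.le),
            mul_nonneg (abs_nonneg (p + m)) (mul_nonneg (sub_nonneg.2 hbb) hpa.le)]
        · gcongr
          all_goals first | positivity | nlinarith

private lemma aux_bound2 (δ p m a b l : ℝ) (hδ : 0 < δ) (ha : a ≤ -δ) (hb : b ≤ -δ)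
    (hal : a ≤ l) (hbl : b ≤ l) (hl : l ≤ 0) :
    |l * (p / a + m / b)| ≤ |p + m| + |(p - m) * (b - a)| / (2 * δ) := by
  have haa : δ ≤ |a| := by rw [abs_of_nonpos (by nlinarith)]; linarith
  have hbb : δ ≤ |b| := by rw [abs_of_nonpos (by nlinarith)]; linarith
  have hpa : 0 < |a| := lt_of_lt_of_le hδ haa
  have hpb : 0 < |b| := lt_of_lt_of_le hδ hbb
  have hla : |l| ≤ |a| := by
    rw [abs_of_nonpos hl, abs_of_nonpos (by nlinarith)]; linarith
  have hlb : |l| ≤ |b| := by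
    rw [abs_of_nonpos hl, abs_of_nonpos (by nlinarith)]; linarith
  rw [abs_mul, aux_key δ p m a b hδ ha hb, abs_div, abs_mul, abs_mul, abs_two]
  set X := (p + m) * (a + b)
  set Y := (p - m) * (b - a)
  calc |l| * (|X + Y| / (2 * (|a| * |b|)))
      ≤ |l| * ((|X| + |Y|) / (2 * (|a| * |b|))) := by
        gcongr
        exact abs_add_le _ _
    _ = |l| * |X| / (2 * (|a| * |b|)) + |l| * |Y| / (2 * (|a| * |b|)) := by ring
    _ ≤ |p + m| + |Y| / (2 * δ) := by
        gcongr ?_ + ?_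
        · rw [div_le_iff₀ (by positivity)]
          have hX : |X| = |p + m| * |a + b| := abs_mul _ _
          nlinarith [mul_le_mul_of_nonneg_left
              (mul_le_mul_of_nonneg_left (abs_add_le a b) (abs_nonneg (p + m))) (abs_nonneg l),
            mul_nonneg (abs_nonneg (p + m)) (mul_nonneg (sub_nonneg.2 hlb) hpa.le),
            mul_nonneg (abs_nonneg (p + m)) (mul_nonneg (sub_nonneg.2 hla) hpb.le)]
        · rw [div_le_div_iff₀ (by positivity) (by positivity)]
          nlinarith [mul_nonneg (abs_nonneg Y) (mul_nonneg (sub_nonneg.2 hla) hδ.le),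
            mul_nonneg (mul_nonneg (abs_nonneg Y) hpa.le) (sub_nonneg.2 hbb)]

private lemma aux_tendsto (c μ : ℝ) :
    Tendsto (fun l : ℝ => l * (μ / (l - c))) atBot (nhds μ) := by
  have h1 : Tendsto (fun l : ℝ => l - c) atBot atBot :=
    tendsto_atBot_add_const_right _ (-c) tendsto_id
  have h2 : Tendsto (fun l : ℝ => (l - c)⁻¹) atBot (nhds 0) := by
    have h := (tendsto_neg_atBot_atTop.comp h1).inv_tendsto_atTop.neg
    rw [neg_zero] at h
    refine h.congr fun l => ?_
    simp only [Pi.inv_apply, Function.comp_apply]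
    rw [← inv_neg]
    ring_nf
  have h3 : Tendsto (fun l : ℝ => μ + μ * c * (l - c)⁻¹) atBot (nhds (μ + μ * c * 0)) :=
    tendsto_const_nhds.add (tendsto_const_nhds.mul h2)
  rw [mul_zero, add_zero] at h3
  refine h3.congr' ?_
  filter_upwards [eventually_lt_atBot c] with l hl
  have hne : l - c ≠ 0 := by intro h; nlinarith
  field_simp
  ring


/-- Absolute convergence and `λ → -∞` limit of the effective-mass series
`S(λ) = μ₀⁺/(λ - λ₀⁺) + Σ (μ_n⁺/(λ - λ_n⁺) + μ_n⁻/(λ - λ_n⁻))`: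
`λ S(λ) → μ₀⁺ + Σ (μ_n⁺ + μ_n⁻)` as `λ → -∞`. -/
theorem stmt_15 (lam₀ : ℝ) (hlam₀ : 0 ≤ lam₀) (δ : ℝ) (hδ : 0 < δ)
    (lamm lamp : ℕ → ℝ) (hband : ∀ n, δ ≤ lamm n ∧ lamm n ≤ lamp n)
    (hlim : Filter.Tendsto lamm Filter.atTop Filter.atTop)
    (μ₀ : ℝ) (μp μm : ℕ → ℝ)
    (hs1 : Summable (fun n => |μp n + μm n|))
    (hs2 : Summable (fun n => |(μp n - μm n) * (lamp n - lamm n)|)) :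
    (∀ l : ℝ, l < 0 →
      Summable (fun n => |μp n / (l - lamp n) + μm n / (l - lamm n)|)) ∧
    Filter.Tendsto
      (fun l : ℝ => l * (μ₀ / (l - lam₀) +
        ∑' n, (μp n / (l - lamp n) + μm n / (l - lamm n))))
      Filter.atBot (nhds (μ₀ + ∑' n, (μp n + μm n))) := by
  have hap : ∀ (l : ℝ), l < 0 → ∀ n, l - lamp n ≤ -δ := fun l hl n => by
    have h := hband n; linarith [h.1, h.2]
  have ham : ∀ (l : ℝ), l < 0 → ∀ n, l - lamm n ≤ -δ := fun l hl n => by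
    have h := hband n; linarith [h.1]
  constructor
  · intro l hl
    refine Summable.of_nonneg_of_le (fun n => abs_nonneg _) (fun n => ?_)
      ((hs1.div_const δ).add (hs2.div_const (2 * δ ^ 2)))
    have h := aux_bound1 δ (μp n) (μm n) (l - lamp n) (l - lamm n) hδ
      (hap l hl n) (ham l hl n)
    rw [show (l - lamm n) - (l - lamp n) = lamp n - lamm n by ring] at h
    exact h
  · have key : (fun l : ℝ => l * (μ₀ / (l - lam₀) +
        ∑' n, (μp n / (l - lamp n) + μm n / (l - lamm n)))) =
        fun l : ℝ => l * (μ₀ / (l - lam₀)) +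
          ∑' n, l * (μp n / (l - lamp n) + μm n / (l - lamm n)) := by
      funext l
      rw [mul_add, tsum_mul_left]
    rw [key]
    refine Tendsto.add (aux_tendsto lam₀ μ₀) ?_
    refine tendsto_tsum_of_dominated_convergence
      (f := fun (l : ℝ) (n : ℕ) => l * (μp n / (l - lamp n) + μm n / (l - lamm n)))
      (g := fun n => μp n + μm n)
      (bound := fun n => |μp n + μm n| + |(μp n - μm n) * (lamp n - lamm n)| / (2 * δ))
      (hs1.add (hs2.div_const (2 * δ))) (fun n => ?_) ?_
    · have h := (aux_tendsto (lamp n) (μp n)).add (aux_tendsto (lamm n) (μm n))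
      refine h.congr fun l => ?_
      ring
    · filter_upwards [eventually_lt_atBot (0 : ℝ)] with l hl
      intro n
      rw [Real.norm_eq_abs]
      have h := aux_bound2 δ (μp n) (μm n) (l - lamp n) (l - lamm n) l hδ
        (hap l hl n) (ham l hl n) (by linarith [(hband n).1, (hband n).2])
        (by linarith [(hband n).1]) hl.le
      rw [show (l - lamm n) - (l - lamp n) = lamp n - lamm n by ring] at h
      exact h
end
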